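/- For every k ≥ 1 and every normalized fully k-ary string s of length n, the flip grouping distance satisfies d_g(s) ≥ n − k. -/

import Mathlib

/-!
Count the adjacent pairs of equal symbols of a string. A flip `f^(i)` reverses a prefix, which
preserves the equal pairs inside it, and only changes the pair straddling position `i`, so each
flip raises the count by at most one. A normalized string has no equal pair, whereas a grouped
string of length `n` over `k` symbols has at least `n - k` of them (all its pairs but the `k - 1`
block boundaries). Finally, pancake sorting shows that some grouped string is reachable at all, so
the infimum defining `d_g(s)` is attained.
-/

/-- Prefix reversal (flip) of the first `i` symbols of `s`. -/
def pflip (i : ℕ) (s : List ℕ) : List ℕ := (s.take i).reverse ++ s.drop i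

/-- One flip step: `t` is obtained from `s` by some flip `f^(i)` with `1 ≤ i ≤ |s|`. -/
def FlipStep (s t : List ℕ) : Prop := ∃ i, 1 ≤ i ∧ i ≤ s.length ∧ t = pflip i s

/-- `ReachIn m s t`: `t` can be obtained from `s` by exactly `m` flips. -/
def ReachIn : ℕ → List ℕ → List ℕ → Prop
  | 0 => fun s t => s = t
  | (m+1) => fun s t => ∃ u, FlipStep s u ∧ ReachIn m u t

/-- Flip distance: minimum number of flips transforming `s` into `t`. -/
noncomputable def flipDist (s t : List ℕ) : ℕ := sInf {m | ReachIn m s t}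

/-- Two strings are compatible if every symbol occurs equally often in both. -/
def Compatible (s t : List ℕ) : Prop := ∀ a, s.count a = t.count a

/-- A string is fully `k`-ary if the set of symbols occurring in it is exactly `{0,…,k-1}`. -/
def FullyKary (k : ℕ) (s : List ℕ) : Prop := ∀ a, a ∈ s ↔ a < k

/-- A string is normalized if no two adjacent symbols are equal. -/
def Normalized (s : List ℕ) : Prop := s.Chain' (· ≠ ·)

/-- A string is grouped if the occurrences of each symbol are consecutive. -/
def Grouped (s : List ℕ) : Prop :=
  ∀ i j l : Fin s.length, i < j → j < l → s.get i = s.get l → s.get j = s.get i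

/-- Flip grouping distance: minimum number of flips transforming `s` into some grouped string. -/
noncomputable def groupDist (s : List ℕ) : ℕ := sInf {m | ∃ t, Grouped t ∧ ReachIn m s t}

/-- Flip sorting distance: flip distance from `s` to its non-descending rearrangement `I(s)`. -/
noncomputable def sortDist (s : List ℕ) : ℕ := flipDist s (s.insertionSort (· ≤ ·))

/-- `rep w m` is the concatenation of `m` copies of the string `w`. -/
def rep (w : List ℕ) (m : ℕ) : List ℕ := (List.replicate m w).flatten

section EqAdjCount

variable {α : Type*} [DecidableEq α]

def eqAdjCount : List α → ℕ
  | a :: b :: l => (if a = b then 1 else 0) + eqAdjCount (b :: l)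
  | _ => 0

@[simp] lemma eqAdjCount_nil : eqAdjCount ([] : List α) = 0 := rfl

lemma eqAdjCount_cons (a : α) (l : List α) :
    eqAdjCount (a :: l) = (if l.head? = some a then 1 else 0) + eqAdjCount l := by
  cases l with
  | nil => rfl
  | cons b t => simp [eqAdjCount, eq_comm]

lemma eqAdjCount_concat (l : List α) (a : α) :
    eqAdjCount (l ++ [a]) = (if l.getLast? = some a then 1 else 0) + eqAdjCount l := by
  induction l with
  | nil => rfl
  | cons b l ih =>
    rw [List.cons_append, eqAdjCount_cons, eqAdjCount_cons, ih]
    cases l with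
    | nil => simp [eq_comm]
    | cons c l' =>
      simp only [List.cons_append, List.head?_cons, List.getLast?_cons_cons, Option.some.injEq]
      omega

@[simp] lemma eqAdjCount_reverse (l : List α) : eqAdjCount l.reverse = eqAdjCount l := by
  induction l with
  | nil => rfl
  | cons a l ih =>
    rw [List.reverse_cons, eqAdjCount_concat, ih, eqAdjCount_cons, List.getLast?_reverse]

lemma eqAdjCount_add_le_append (l r : List α) :
    eqAdjCount l + eqAdjCount r ≤ eqAdjCount (l ++ r) := by
  induction l with
  | nil => simp
  | cons a l ih =>
    rw [List.cons_append, eqAdjCount_cons, eqAdjCount_cons]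
    cases l with
    | nil => simp
    | cons b l' => simp only [List.cons_append, List.head?_cons, Option.some.injEq] at *; omega

lemma eqAdjCount_append_le (l r : List α) :
    eqAdjCount (l ++ r) ≤ eqAdjCount l + eqAdjCount r + 1 := by
  induction l with
  | nil => simp
  | cons a l ih =>
    rw [List.cons_append, eqAdjCount_cons, eqAdjCount_cons]
    cases l with
    | nil => simp only [List.nil_append, List.head?_nil, eqAdjCount_nil]; split <;> omega
    | cons b l' => simp only [List.cons_append, List.head?_cons, Option.some.injEq] at *; omega

lemma eqAdjCount_eq_zero_of_isChain_ne {l : List α} (h : l.IsChain (· ≠ ·)) :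
    eqAdjCount l = 0 := by
  induction l with
  | nil => rfl
  | cons a l ih =>
    cases l with
    | nil => rfl
    | cons b t =>
      rw [List.isChain_cons_cons] at h
      simp [eqAdjCount, h.1, ih h.2]

end EqAdjCount

lemma eqAdjCount_pflip_le (i : ℕ) (s : List ℕ) : eqAdjCount (pflip i s) ≤ eqAdjCount s + 1 := by
  have hflip := eqAdjCount_append_le (s.take i).reverse (s.drop i)
  have hsplit := eqAdjCount_add_le_append (s.take i) (s.drop i)
  rw [eqAdjCount_reverse] at hflip
  rw [List.take_append_drop] at hsplit
  unfold pflip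
  omega

lemma pflip_perm (i : ℕ) (s : List ℕ) : (pflip i s).Perm s := by
  simpa only [pflip, List.take_append_drop] using (s.take i).reverse_perm.append_right (s.drop i)

lemma pflip_append {i : ℕ} {u : List ℕ} (w : List ℕ) (h : i ≤ u.length) :
    pflip i (u ++ w) = pflip i u ++ w := by
  rw [pflip, pflip, List.take_append_of_le_length h, List.drop_append_of_le_length h,
    List.append_assoc]

namespace ReachIn

lemma perm : ∀ {m : ℕ} {s t : List ℕ}, ReachIn m s t → s.Perm t
  | 0, _, _, rfl => List.Perm.refl _
  | _ + 1, s, _, ⟨_, ⟨i, _, _, rfl⟩, hr⟩ => (pflip_perm i s).symm.trans hr.perm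

lemma eqAdjCount_le : ∀ {m : ℕ} {s t : List ℕ}, ReachIn m s t → eqAdjCount t ≤ eqAdjCount s + m
  | 0, _, _, rfl => le_rfl
  | m + 1, s, _, ⟨_, ⟨i, _, _, rfl⟩, hr⟩ => by
    have := hr.eqAdjCount_le
    have := eqAdjCount_pflip_le i s
    omega

lemma trans : ∀ {m₁ m₂ : ℕ} {s u t : List ℕ}, ReachIn m₁ s u → ReachIn m₂ u t →
    ReachIn (m₁ + m₂) s t
  | 0, _, _, _, _, rfl, h => by rwa [Nat.zero_add]
  | m + 1, m₂, _, _, _, ⟨v, hv, hr⟩, h => by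
    rw [Nat.add_right_comm]
    exact ⟨v, hv, hr.trans h⟩

lemma append_right : ∀ {m : ℕ} {u v : List ℕ} (w : List ℕ), ReachIn m u v →
    ReachIn m (u ++ w) (v ++ w)
  | 0, _, _, _, rfl => rfl
  | _ + 1, u, _, w, ⟨_, ⟨i, h1, h2, rfl⟩, hr⟩ =>
    ⟨pflip i u ++ w, ⟨i, h1, by simp; omega, (pflip_append w h2).symm⟩, hr.append_right w⟩

end ReachIn

lemma reachIn_two_to_end (l r : List ℕ) (a : ℕ) :
    ReachIn 2 (l ++ a :: r) ((l.reverse ++ r).reverse ++ [a]) := by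
  refine ⟨a :: (l.reverse ++ r), ⟨l.length + 1, by omega, by simp, ?_⟩,
    _, ⟨l.length + r.length + 1, by omega, by simp, ?_⟩, rfl⟩
  · rw [show l ++ a :: r = (l ++ [a]) ++ r by simp, pflip,
      List.take_left' (by simp), List.drop_left' (by simp)]
    simp
  · simp [pflip, List.take_of_length_le, List.drop_of_length_le]

open List in
lemma exists_reachIn_of_perm {s t : List ℕ} (h : s.Perm t) : ∃ m, ReachIn m s t := by
  induction t using List.reverseRecOn generalizing s with
  | nil => exact ⟨0, h.eq_nil⟩
  | append_singleton t a ih =>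
    obtain ⟨l, r, rfl⟩ :=
      List.append_of_mem (h.mem_iff.mpr (List.mem_append_right t (List.mem_singleton_self a)))
    have hperm : (l.reverse ++ r).reverse.Perm t := by
      refine (List.perm_append_right_iff [a]).mp ?_
      calc (l.reverse ++ r).reverse ++ [a] ~ a :: (l.reverse ++ r) := by
            simpa using List.reverse_perm (a :: (l.reverse ++ r))
        _ ~ l ++ a :: r := ((l.reverse_perm.append_right r).cons a).trans List.perm_middle.symm
        _ ~ t ++ [a] := h
    obtain ⟨m, hm⟩ := ih hperm
    exact ⟨2 + m, (reachIn_two_to_end l r a).trans (hm.append_right [a])⟩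

namespace Grouped

lemma getElem_eq {t : List ℕ} (ht : Grouped t) {i j l : ℕ} (hij : i < j) (hjl : j < l)
    (hl : l < t.length) (he : t[i] = t[l]) : t[j] = t[i] := by
  simpa using ht ⟨i, by omega⟩ ⟨j, by omega⟩ ⟨l, hl⟩ hij hjl (by simpa using he)

lemma of_cons {a : ℕ} {t : List ℕ} (h : Grouped (a :: t)) : Grouped t := by
  intro i j l hij hjl he
  simpa using h.getElem_eq (i := i + 1) (j := j + 1) (l := l + 1)
    (by simpa using hij) (by simpa using hjl) (by simp) (by simpa using he)

lemma not_mem_of_ne {a b : ℕ} {r : List ℕ} (h : Grouped (a :: b :: r)) (hab : a ≠ b) :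
    a ∉ b :: r := by
  intro hmem
  obtain ⟨p, hp, hgp⟩ := List.mem_iff_getElem.mp hmem
  rcases Nat.eq_zero_or_pos p with rfl | hpos
  · exact hab (by simpa using hgp.symm)
  · exact hab (by simpa using (h.getElem_eq (i := 0) (j := 1) (l := p + 1) (by omega) (by omega)
      (by simpa using hp) (by simpa using hgp.symm)).symm)

/-- In a grouped string, each unequal adjacent pair opens the block of a symbol not seen before. -/
lemma length_le {t : List ℕ} (ht : Grouped t) : t.length ≤ eqAdjCount t + t.toFinset.card := by
  induction t with
  | nil => simp
  | cons a u ih =>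
    have ihu := ih ht.of_cons
    cases u with
    | nil => simp
    | cons b r =>
      by_cases hab : a = b
      · subst hab
        simp only [eqAdjCount, if_pos, List.toFinset_cons, Finset.insert_idem,
          List.length_cons] at *
        omega
      · have hcard : (a :: b :: r).toFinset.card = (b :: r).toFinset.card + 1 := by
          rw [List.toFinset_cons,
            Finset.card_insert_of_notMem (mt List.mem_toFinset.mp (ht.not_mem_of_ne hab))]
        simp only [eqAdjCount, hab, if_false, List.length_cons] at *
        omega

end Grouped

lemma grouped_of_pairwise_le {t : List ℕ} (h : t.Pairwise (· ≤ ·)) : Grouped t :=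
  fun _ _ _ hij hjl he => le_antisymm (he ▸ h.rel_get_of_lt hjl) (h.rel_get_of_lt hij)

lemma exists_reachIn_grouped (s : List ℕ) : ∃ m t, Grouped t ∧ ReachIn m s t := by
  obtain ⟨m, hm⟩ := exists_reachIn_of_perm (List.perm_insertionSort (· ≤ ·) s).symm
  exact ⟨m, _, grouped_of_pairwise_le (List.pairwise_insertionSort (· ≤ ·) s), hm⟩

lemma length_sub_card_le_eqAdjCount_add_groupDist (s : List ℕ) :
    s.length - s.toFinset.card ≤ eqAdjCount s + groupDist s := by
  obtain ⟨m, hm⟩ := exists_reachIn_grouped s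
  obtain ⟨t, ht, hst⟩ : ∃ t, Grouped t ∧ ReachIn (groupDist s) s t :=
    Nat.sInf_mem (s := {m | ∃ t, Grouped t ∧ ReachIn m s t}) ⟨m, hm⟩
  have hperm := hst.perm
  have hadj := hst.eqAdjCount_le
  have hlen := ht.length_le
  rw [← hperm.length_eq, ← List.toFinset_eq_of_perm _ _ hperm] at hlen
  omega

lemma FullyKary.card_toFinset {k : ℕ} {s : List ℕ} (h : FullyKary k s) : s.toFinset.card = k := by
  rw [show s.toFinset = Finset.range k by ext a; simp [h a], Finset.card_range]

theorem grouping_lower_bound (k n : ℕ) (s : List ℕ)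
    (hlen : s.length = n) (hfull : FullyKary k s) (hnorm : Normalized s) :
    n - k ≤ groupDist s := by
  have := length_sub_card_le_eqAdjCount_add_groupDist s
  rw [eqAdjCount_eq_zero_of_isChain_ne hnorm, hfull.card_toFinset, hlen] at this
  omega
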